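/- A bounded right linear operator A on a quaternionic Hilbert space is an orthogonal projection (resp. a partial isometry) if and only if the associated complex operator χ_A on H₊ ⊕ H₊ is an orthogonal projection (resp. a partial isometry). -/

import Mathlib

/-!
Put `G (x, y) = x - (cj y)·n`. Because `H = H₊ ⊕ H₊·n`, `G` is a bijection `H₊ ⊕ H₊ → H`, and
the decomposition `A = A₁ + A₂·n` says exactly that `A ∘ G = G ∘ χ_A`. The `ℂ_m`-component of
`⟨G p, G q⟩` is the inner product of `p` and `q` in `H₊ ⊕ H₊`, so `G` is isometric. Since a
quaternion `q` with `q` and `n q` both orthogonal to `ℂ_m` vanishes, and `H` is stable under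
`·n`, the `ℂ_m`-components of inner products in `H` determine them. Hence self-adjointness,
idempotence, kernels, their orthogonal complements and norms all transfer along `G`.
-/

noncomputable section

open MulOpposite

local notation "ℍ" => Quaternion ℝ

variable {H : Type*} [NormedAddCommGroup H] [Module ℍᵐᵒᵖ H]

/-- The axioms of a quaternion-valued inner product compatible with the norm on a
right quaternionic module `H` (scalars act on the right via `ℍᵐᵒᵖ`). -/
structure QInner (inn : H → H → ℍ) : Prop where
  add_right : ∀ u v w : H, inn u (v + w) = inn u v + inn u w
  smul_right : ∀ (u v : H) (q : ℍ), inn u (op q • v) = inn u v * q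
  conj_symm : ∀ u v : H, inn u v = star (inn v u)
  norm_sq : ∀ u : H, inn u u = ((‖u‖ ^ 2 : ℝ) : ℍ)

/-- `B` is the adjoint of the bounded right linear operator `A`. -/
def IsAdjB (inn : H → H → ℍ) (A B : H →L[ℍᵐᵒᵖ] H) : Prop :=
  ∀ x y : H, inn (B x) y = inn x (A y)

/-- `A` is a positive bounded operator. -/
def IsPosB (inn : H → H → ℍ) (A : H →L[ℍᵐᵒᵖ] H) : Prop :=
  IsAdjB inn A A ∧ ∀ x : H, ∃ r : ℝ, 0 ≤ r ∧ inn x (A x) = (r : ℍ)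

/-- Orthogonal complement of a set. -/
def qOrth (inn : H → H → ℍ) (S : Set H) : Set H := {x | ∀ y ∈ S, inn y x = 0}

/-- Null space of a bounded operator. -/
def kerB (A : H →L[ℍᵐᵒᵖ] H) : Set H := {x | A x = 0}

/-- `U` is a partial isometry: it is isometric on `N(U)^⊥`. -/
def IsPartialIsomB (inn : H → H → ℍ) (U : H →L[ℍᵐᵒᵖ] H) : Prop :=
  ∀ x ∈ qOrth inn (kerB U), ‖U x‖ = ‖x‖

/-- Null space of an unbounded operator. -/
def pKer (T : H →ₗ.[ℍᵐᵒᵖ] H) : Set H := {x | ∃ hx : x ∈ T.domain, T ⟨x, hx⟩ = 0}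

/-- Range of an unbounded operator. -/
def pRan (T : H →ₗ.[ℍᵐᵒᵖ] H) : Set H := Set.range fun x : T.domain => T x

/-- `S` is the adjoint of the densely defined operator `T` : the formal adjoint
identity holds and the domain of `S` is maximal. -/
def IsAdjP (inn : H → H → ℍ) (T S : H →ₗ.[ℍᵐᵒᵖ] H) : Prop :=
  (∀ (x : S.domain) (y : T.domain), inn (x : H) (T y) = inn (S x) (y : H)) ∧
  ∀ x z : H, (∀ y : T.domain, inn x (T y) = inn z (y : H)) → x ∈ S.domain

/-- `T` is a positive (self-adjoint) unbounded operator. -/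
def IsPosP (inn : H → H → ℍ) (T : H →ₗ.[ℍᵐᵒᵖ] H) : Prop :=
  IsAdjP inn T T ∧ ∀ x : T.domain, ∃ r : ℝ, 0 ≤ r ∧ inn (x : H) (T x) = (r : ℍ)

/-- `C = S ∘ T` as unbounded operators, with the usual maximal domain. -/
def IsCompP (S T C : H →ₗ.[ℍᵐᵒᵖ] H) : Prop :=
  (∀ x : H, x ∈ C.domain ↔ ∃ hx : x ∈ T.domain, T ⟨x, hx⟩ ∈ S.domain) ∧
  ∀ (x : C.domain) (hx : (x : H) ∈ T.domain) (h2 : T ⟨x, hx⟩ ∈ S.domain),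
    C x = S ⟨T ⟨x, hx⟩, h2⟩

/-- `T = U ∘ P` where `U` is bounded and `T`, `P` are unbounded. -/
def EqCompB (T : H →ₗ.[ℍᵐᵒᵖ] H) (U : H →L[ℍᵐᵒᵖ] H) (P : H →ₗ.[ℍᵐᵒᵖ] H) : Prop :=
  T.domain = P.domain ∧
  ∀ (x : H) (hx : x ∈ T.domain) (hx' : x ∈ P.domain), T ⟨x, hx⟩ = U (P ⟨x, hx'⟩)

/-- The bounded operator `B` commutes with the unbounded operator `T`, i.e. `TB ⊆ BT`. -/
def CommP (B : H →L[ℍᵐᵒᵖ] H) (T : H →ₗ.[ℍᵐᵒᵖ] H) : Prop :=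
  ∀ x : T.domain, ∃ h : B (x : H) ∈ T.domain, T ⟨B (x : H), h⟩ = B (T x)


/-- The slice Hilbert space `H₊^{Jm} = {x ∈ H : Jx = x·m}`. -/
def Hplus (J : H →L[ℍᵐᵒᵖ] H) (m : ℍ) : Set H := {x | J x = op m • x}

/-- Pairs with both components in the slice `H₊^{Jm}` (the space `H₊ ⊕ H₊`). -/
def Hplus2 (J : H →L[ℍᵐᵒᵖ] H) (m : ℍ) : Set (H × H) :=
  {p | p.1 ∈ Hplus J m ∧ p.2 ∈ Hplus J m}

/-- The `ℂ_m`-valued inner product on `H₊ ⊕ H₊`. -/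
def innP (inn : H → H → ℍ) (p q : H × H) : ℍ := inn p.1 q.1 + inn p.2 q.2

/-- The Hilbert space norm on `H₊ ⊕ H₊`. -/
def normP (p : H × H) : ℝ := Real.sqrt (‖p.1‖ ^ 2 + ‖p.2‖ ^ 2)

/-- `cj` is a conjugation of the slice `H₊^{Jm}` (e.g. the one induced by an
orthonormal basis of `H₊^{Jm}`): an additive, `ℂ_m`-antilinear, isometric involution. -/
structure IsSliceConj (inn : H → H → ℍ) (J : H →L[ℍᵐᵒᵖ] H) (m : ℍ) (cj : H → H) : Prop where
  mem : ∀ x ∈ Hplus J m, cj x ∈ Hplus J m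
  add : ∀ x y : H, cj (x + y) = cj x + cj y
  invol : ∀ x : H, cj (cj x) = x
  antilinear : ∀ x : H, cj (op m • x) = -(op m • cj x)
  inner : ∀ x ∈ Hplus J m, ∀ y ∈ Hplus J m, inn (cj x) (cj y) = inn y x

/-- `A = A₁ + A₂ · n` : the bounded right linear operator `A` decomposes along the slice
`H₊^{Jm}` into the pair of bounded `ℂ_m`-linear operators `A₁, A₂` on `H₊^{Jm}`. -/
structure IsSliceDecomp (inn : H → H → ℍ) (J : H →L[ℍᵐᵒᵖ] H) (m n : ℍ) (cj : H → H)
    (A : H →L[ℍᵐᵒᵖ] H) (A₁ A₂ : H → H) : Prop where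
  mem₁ : ∀ x ∈ Hplus J m, A₁ x ∈ Hplus J m
  mem₂ : ∀ x ∈ Hplus J m, A₂ x ∈ Hplus J m
  add₁ : ∀ x y : H, A₁ (x + y) = A₁ x + A₁ y
  add₂ : ∀ x y : H, A₂ (x + y) = A₂ x + A₂ y
  lin₁ : ∀ x : H, A₁ (op m • x) = op m • A₁ x
  lin₂ : ∀ x : H, A₂ (op m • x) = op m • A₂ x
  decomp : ∀ x ∈ Hplus J m, A x = A₁ x + op n • A₂ (cj x)

/-- The operator matrix `χ_A = [[A₁, A₂], [-conj(A₂), conj(A₁)]]` acting on `H₊ ⊕ H₊`,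
where `conj(B) = cj ∘ B ∘ cj`. -/
def chi (cj A₁ A₂ : H → H) (p : H × H) : H × H :=
  (A₁ p.1 + A₂ p.2, -(cj (A₂ (cj p.1))) + cj (A₁ (cj p.2)))

/-- The standing assumptions of the slice decomposition: `J` is anti self-adjoint and
unitary, `m, n` are anticommuting imaginary units, and `H = H₊ ⊕ H₊·n`. -/
structure SliceSetup (inn : H → H → ℍ) (J : H →L[ℍᵐᵒᵖ] H) (m n : ℍ) : Prop where
  Jadj : IsAdjB inn J (-J)
  Junit : J.comp J = -1
  m_im : m.re = 0
  m_norm : ‖m‖ = 1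
  n_im : n.re = 0
  n_norm : ‖n‖ = 1
  anticomm : m * n = -(n * m)
  split : ∀ x : H, ∃ x₁ ∈ Hplus J m, ∃ x₂ ∈ Hplus J m, x = x₁ + op n • x₂
  split_unique : ∀ x₁ ∈ Hplus J m, ∀ x₂ ∈ Hplus J m,
    x₁ + op n • x₂ = 0 → x₁ = 0 ∧ x₂ = 0


section Quaternion

variable {m n : ℍ}

lemma quaternion_two_ne_zero : (2 : ℍ) ≠ 0 := by
  have h : ((2 : ℝ) : ℍ) ≠ ((0 : ℝ) : ℍ) := by rw [Ne, Quaternion.coe_inj]; norm_num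
  exact_mod_cast h

lemma mul_self_eq_neg_one_of_re_eq_zero (hre : m.re = 0) (hnorm : ‖m‖ = 1) : m * m = -1 := by
  rw [← sq, Quaternion.sq_eq_neg_normSq.mpr hre, Quaternion.normSq_eq_norm_mul_self, hnorm,
    mul_one, Quaternion.coe_one]

lemma mul_eq_star_mul_of_commute (hm : m * m = -1) (hm_star : star m = -m)
    (hmn : m * n = -(n * m)) {d : ℍ} (hd : Commute m d) : n * d = star d * n := by
  -- `d.im` commutes with `m`, so `d.im * m` is real and `d.im` is a real multiple of `m`.
  have him : Commute m d.im := by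
    rw [← add_sub_cancel_left (d.re : ℍ) d.im, Quaternion.re_add_im]
    exact hd.sub_right (Quaternion.coe_commutes d.re m).symm
  have hreal : d.im * m = ((d.im * m).re : ℍ) := by
    rw [← Quaternion.star_eq_self, star_mul, hm_star, Quaternion.star_im, neg_mul_neg, him.eq]
  have him_eq : d.im = -(((d.im * m).re : ℍ) * m) := by
    rw [← hreal, mul_assoc, hm, mul_neg_one, neg_neg]
  rw [← Quaternion.re_add_im d, star_add, Quaternion.star_coe, Quaternion.star_im, him_eq]
  simp only [mul_add, add_mul, mul_neg, neg_neg, Quaternion.coe_commutes, mul_assoc]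
  rw [← mul_assoc n, ← mul_assoc m, hmn, neg_mul]

/-- Twice the component of `q` in `ℂ_m = ℝ + ℝ m`, when `m` is an imaginary unit. -/
def cPart (m q : ℍ) : ℍ := q - m * q * m

lemma cPart_add (m a b : ℍ) : cPart m (a + b) = cPart m a + cPart m b := by
  simp only [cPart]; noncomm_ring

lemma cPart_sub (m a b : ℍ) : cPart m (a - b) = cPart m a - cPart m b := by
  simp only [cPart]; noncomm_ring

lemma cPart_neg (m a : ℍ) : cPart m (-a) = -cPart m a := by
  simp only [cPart]; noncomm_ring

lemma cPart_of_commute (hm : m * m = -1) {q : ℍ} (hq : Commute m q) : cPart m q = 2 * q := by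
  rw [cPart, hq.eq, mul_assoc, hm, mul_neg_one, sub_neg_eq_add, two_mul]

lemma cPart_eq_zero_iff (hm : m * m = -1) {q : ℍ} : cPart m q = 0 ↔ m * q = -(q * m) := by
  constructor
  · intro h
    have h' : q = m * q * m := sub_eq_zero.mp h
    calc m * q = m * (m * q * m) := by rw [← h']
      _ = -(q * m) := by rw [← mul_assoc, ← mul_assoc, hm, neg_one_mul, neg_mul]
  · intro h
    rw [cPart, h, neg_mul, mul_assoc, hm, mul_neg_one, neg_neg, sub_self]

lemma cPart_mul_right_eq_zero (hm : m * m = -1) (hmn : m * n = -(n * m)) {q : ℍ}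
    (hq : Commute m q) : cPart m (q * n) = 0 := by
  rw [cPart_eq_zero_iff hm, ← mul_assoc, hq.eq, mul_assoc, hmn, mul_neg, mul_assoc]

lemma cPart_mul_left_eq_zero (hm : m * m = -1) (hmn : m * n = -(n * m)) {q : ℍ}
    (hq : Commute m q) : cPart m (n * q) = 0 := by
  rw [cPart_eq_zero_iff hm, ← mul_assoc, hmn, neg_mul, mul_assoc, hq.eq, mul_assoc]

lemma eq_zero_of_cPart_eq_zero (hm : m * m = -1) (hn : n ≠ 0) (hmn : m * n = -(n * m)) {q : ℍ}
    (hq : cPart m q = 0) (hnq : cPart m (n * q) = 0) : q = 0 := by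
  rw [cPart_eq_zero_iff hm] at hq hnq
  -- `n * q` both commutes and anticommutes with `m`.
  have h : n * q * m = -(n * q * m) :=
    calc n * q * m = m * (n * q) := by
          rw [← mul_assoc, hmn, neg_mul, mul_assoc n m q, hq, mul_neg, neg_neg, mul_assoc]
      _ = -(n * q * m) := hnq
  have h2 : (2 : ℍ) * (n * q * m) = 0 := by rw [two_mul]; nth_rewrite 1 [h]; exact neg_add_cancel _
  simpa [hn, quaternion_two_ne_zero, (show m ≠ 0 by rintro rfl; simp at hm)] using h2

end Quaternion

namespace QInner

variable {inn : H → H → ℍ}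

lemma add_left (hinn : QInner inn) (u v w : H) : inn (u + v) w = inn u w + inn v w := by
  rw [hinn.conj_symm, hinn.add_right, star_add, ← hinn.conj_symm, ← hinn.conj_symm]

lemma smul_left (hinn : QInner inn) (u v : H) (q : ℍ) : inn (op q • u) v = star q * inn u v := by
  rw [hinn.conj_symm, hinn.smul_right, star_mul, ← hinn.conj_symm]

lemma sub_right (hinn : QInner inn) (u v w : H) : inn u (v - w) = inn u v - inn u w :=
  (AddMonoidHom.mk' (inn u) (hinn.add_right u)).map_sub v w

lemma sub_left (hinn : QInner inn) (u v w : H) : inn (u - v) w = inn u w - inn v w :=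
  (AddMonoidHom.mk' (inn · w) (hinn.add_left · · w)).map_sub u v

end QInner

section Slice

variable {inn : H → H → ℍ} {J : H →L[ℍᵐᵒᵖ] H} {m n : ℍ} {cj : H → H}

lemma mem_Hplus {x : H} : x ∈ Hplus J m ↔ J x = op m • x := Iff.rfl

lemma zero_mem_Hplus : (0 : H) ∈ Hplus J m := by
  rw [mem_Hplus, map_zero, smul_zero]

lemma neg_mem_Hplus {x : H} (hx : x ∈ Hplus J m) : -x ∈ Hplus J m := by
  rw [mem_Hplus] at hx ⊢
  rw [map_neg, hx, smul_neg]

lemma add_mem_Hplus {x y : H} (hx : x ∈ Hplus J m) (hy : y ∈ Hplus J m) : x + y ∈ Hplus J m := by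
  rw [mem_Hplus] at hx hy ⊢
  rw [map_add, hx, hy, smul_add]

lemma sub_mem_Hplus {x y : H} (hx : x ∈ Hplus J m) (hy : y ∈ Hplus J m) : x - y ∈ Hplus J m := by
  rw [sub_eq_add_neg]
  exact add_mem_Hplus hx (neg_mem_Hplus hy)

lemma commute_inner_of_mem_Hplus (hinn : QInner inn) (hJ : IsAdjB inn J (-J)) (hm : m.re = 0)
    {u v : H} (hu : u ∈ Hplus J m) (hv : v ∈ Hplus J m) : Commute m (inn u v) := by
  have h := hJ u v
  rw [neg_apply, hu, hv, ← neg_smul, ← op_neg, hinn.smul_left,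
    hinn.smul_right, star_neg, Quaternion.star_eq_neg.mpr hm, neg_neg] at h
  exact h

namespace SliceSetup

lemma m_mul_self (hs : SliceSetup inn J m n) : m * m = -1 :=
  mul_self_eq_neg_one_of_re_eq_zero hs.m_im hs.m_norm

lemma n_mul_self (hs : SliceSetup inn J m n) : n * n = -1 :=
  mul_self_eq_neg_one_of_re_eq_zero hs.n_im hs.n_norm

lemma star_m (hs : SliceSetup inn J m n) : star m = -m := Quaternion.star_eq_neg.mpr hs.m_im

lemma star_n (hs : SliceSetup inn J m n) : star n = -n := Quaternion.star_eq_neg.mpr hs.n_im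

lemma n_ne_zero (hs : SliceSetup inn J m n) : n ≠ 0 := by
  rintro rfl
  simpa using hs.n_norm

end SliceSetup

namespace IsSliceConj

lemma map_neg (hcj : IsSliceConj inn J m cj) (x : H) : cj (-x) = -cj x :=
  (AddMonoidHom.mk' cj hcj.add).map_neg x

lemma map_zero (hcj : IsSliceConj inn J m cj) : cj 0 = 0 :=
  (AddMonoidHom.mk' cj hcj.add).map_zero

end IsSliceConj

end Slice

section FromSlices

variable {inn : H → H → ℍ} {J : H →L[ℍᵐᵒᵖ] H} {m n : ℍ} {cj : H → H}
  {A : H →L[ℍᵐᵒᵖ] H} {A₁ A₂ : H → H}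

/-- The identification `H₊ ⊕ H₊ ≅ H` in whose coordinates `A` acts as `χ_A`. -/
def fromSlices (n : ℍ) (cj : H → H) (p : H × H) : H := p.1 - op n • cj p.2

lemma fromSlices_zero (hcj : IsSliceConj inn J m cj) : fromSlices n cj 0 = 0 := by
  simp [fromSlices, hcj.map_zero]

lemma exists_fromSlices_eq (hs : SliceSetup inn J m n) (hcj : IsSliceConj inn J m cj) (x : H) :
    ∃ p ∈ Hplus2 J m, fromSlices n cj p = x := by
  obtain ⟨x₁, hx₁, x₂, hx₂, rfl⟩ := hs.split x
  refine ⟨(x₁, -cj x₂), ⟨hx₁, neg_mem_Hplus (hcj.mem x₂ hx₂)⟩, ?_⟩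
  rw [fromSlices, hcj.map_neg, hcj.invol, smul_neg, sub_neg_eq_add]

lemma fromSlices_injOn (hs : SliceSetup inn J m n) (hcj : IsSliceConj inn J m cj) :
    Set.InjOn (fromSlices n cj) (Hplus2 J m) := by
  rintro ⟨p₁, p₂⟩ ⟨hp₁, hp₂⟩ ⟨q₁, q₂⟩ ⟨hq₁, hq₂⟩ h
  have h0 : (p₁ - q₁) + op n • (cj q₂ - cj p₂) = 0 := by
    rw [smul_sub, ← sub_eq_zero.mpr h, fromSlices, fromSlices]
    abel
  obtain ⟨h₁, h₂⟩ := hs.split_unique _ (sub_mem_Hplus hp₁ hq₁) _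
    (sub_mem_Hplus (hcj.mem _ hq₂) (hcj.mem _ hp₂)) h0
  dsimp only at h₁ h₂
  rw [sub_eq_zero.mp h₁, ← hcj.invol p₂, ← sub_eq_zero.mp h₂, hcj.invol]

lemma chi_mem_Hplus2 (hcj : IsSliceConj inn J m cj) (hdec : IsSliceDecomp inn J m n cj A A₁ A₂)
    {p : H × H} (hp : p ∈ Hplus2 J m) : chi cj A₁ A₂ p ∈ Hplus2 J m :=
  ⟨add_mem_Hplus (hdec.mem₁ _ hp.1) (hdec.mem₂ _ hp.2),
    add_mem_Hplus (neg_mem_Hplus (hcj.mem _ (hdec.mem₂ _ (hcj.mem _ hp.1))))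
      (hcj.mem _ (hdec.mem₁ _ (hcj.mem _ hp.2)))⟩

lemma map_fromSlices (hn : n * n = -1) (hcj : IsSliceConj inn J m cj)
    (hdec : IsSliceDecomp inn J m n cj A A₁ A₂) {p : H × H} (hp : p ∈ Hplus2 J m) :
    A (fromSlices n cj p) = fromSlices n cj (chi cj A₁ A₂ p) := by
  have hn_smul : ∀ x : H, op n • op n • x = -x := fun x => by
    rw [smul_smul, ← op_mul, hn, op_neg, op_one, neg_smul, one_smul]
  simp only [fromSlices, chi, map_sub, map_smul, hdec.decomp _ hp.1, hdec.decomp _ (hcj.mem _ hp.2),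
    hcj.invol, hcj.add, hcj.map_neg, smul_add, smul_neg, hn_smul]
  abel

lemma cPart_inner_fromSlices (hinn : QInner inn) (hs : SliceSetup inn J m n)
    (hcj : IsSliceConj inn J m cj) {p q : H × H} (hp : p ∈ Hplus2 J m) (hq : q ∈ Hplus2 J m) :
    cPart m (inn (fromSlices n cj p) (fromSlices n cj q)) = 2 * innP inn p q := by
  obtain ⟨p₁, p₂⟩ := p
  obtain ⟨q₁, q₂⟩ := q
  obtain ⟨hp₁ : p₁ ∈ Hplus J m, hp₂ : p₂ ∈ Hplus J m⟩ := hp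
  obtain ⟨hq₁ : q₁ ∈ Hplus J m, hq₂ : q₂ ∈ Hplus J m⟩ := hq
  have hm := hs.m_mul_self
  have hmn := hs.anticomm
  have hcomm {u v : H} (hu : u ∈ Hplus J m) (hv : v ∈ Hplus J m) : Commute m (inn u v) :=
    commute_inner_of_mem_Hplus hinn hs.Jadj hs.m_im hu hv
  have hnn : n * (inn (cj p₂) (cj q₂) * n) = -inn p₂ q₂ := by
    rw [← mul_assoc, mul_eq_star_mul_of_commute hm hs.star_m hmn
        (hcomm (hcj.mem _ hp₂) (hcj.mem _ hq₂)), mul_assoc, hs.n_mul_self, mul_neg_one,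
      ← hinn.conj_symm, hcj.inner _ hq₂ _ hp₂]
  simp only [fromSlices, innP, hinn.sub_left, hinn.sub_right, hinn.smul_left, hinn.smul_right,
    hs.star_n, neg_mul, hnn, sub_neg_eq_add, cPart_add, cPart_sub, cPart_neg,
    cPart_of_commute hm (hcomm hp₁ hq₁), cPart_of_commute hm (hcomm hp₂ hq₂),
    cPart_mul_right_eq_zero hm hmn (hcomm hp₁ (hcj.mem _ hq₂)),
    cPart_mul_left_eq_zero hm hmn (hcomm (hcj.mem _ hp₂) hq₁)]
  noncomm_ring

lemma norm_fromSlices (hinn : QInner inn) (hs : SliceSetup inn J m n)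
    (hcj : IsSliceConj inn J m cj) {p : H × H} (hp : p ∈ Hplus2 J m) :
    ‖fromSlices n cj p‖ = normP p := by
  have h := cPart_inner_fromSlices hinn hs hcj hp hp
  rw [hinn.norm_sq, cPart_of_commute hs.m_mul_self (Quaternion.coe_commute _ m).symm, innP,
    hinn.norm_sq, hinn.norm_sq, ← Quaternion.coe_add] at h
  rw [normP, ← Quaternion.coe_injective (mul_left_cancel₀ quaternion_two_ne_zero h),
    Real.sqrt_sq (norm_nonneg _)]

end FromSlices

section Chi

variable {inn : H → H → ℍ} {J : H →L[ℍᵐᵒᵖ] H} {m n : ℍ} {cj : H → H}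
  {A : H →L[ℍᵐᵒᵖ] H} {A₁ A₂ : H → H}

lemma isAdjB_self_iff_chi (hinn : QInner inn) (hs : SliceSetup inn J m n)
    (hcj : IsSliceConj inn J m cj) (hdec : IsSliceDecomp inn J m n cj A A₁ A₂) :
    IsAdjB inn A A ↔ ∀ p ∈ Hplus2 J m, ∀ q ∈ Hplus2 J m,
      innP inn (chi cj A₁ A₂ p) q = innP inn p (chi cj A₁ A₂ q) := by
  have hA {p} (hp : p ∈ Hplus2 J m) := map_fromSlices hs.n_mul_self hcj hdec hp
  have hχ {p} (hp : p ∈ Hplus2 J m) := chi_mem_Hplus2 hcj hdec hp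
  constructor
  · intro h p hp q hq
    apply mul_left_cancel₀ quaternion_two_ne_zero
    rw [← cPart_inner_fromSlices hinn hs hcj (hχ hp) hq,
      ← cPart_inner_fromSlices hinn hs hcj hp (hχ hq), ← hA hp, ← hA hq, h]
  · intro h
    have key (x y : H) : cPart m (inn (A x) y - inn x (A y)) = 0 := by
      obtain ⟨p, hp, rfl⟩ := exists_fromSlices_eq hs hcj x
      obtain ⟨q, hq, rfl⟩ := exists_fromSlices_eq hs hcj y
      rw [cPart_sub, hA hp, hA hq, cPart_inner_fromSlices hinn hs hcj (hχ hp) hq,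
        cPart_inner_fromSlices hinn hs hcj hp (hχ hq), h p hp q hq, sub_self]
    intro x y
    refine sub_eq_zero.mp (eq_zero_of_cPart_eq_zero hs.m_mul_self hs.n_ne_zero hs.anticomm
      (key x y) ?_)
    have h' := key (op n • x) y
    rwa [map_smul, hinn.smul_left, hinn.smul_left, ← mul_sub, hs.star_n, neg_mul, cPart_neg,
      neg_eq_zero] at h'

lemma comp_self_iff_chi (hs : SliceSetup inn J m n) (hcj : IsSliceConj inn J m cj)
    (hdec : IsSliceDecomp inn J m n cj A A₁ A₂) :
    A.comp A = A ↔ ∀ p ∈ Hplus2 J m, chi cj A₁ A₂ (chi cj A₁ A₂ p) = chi cj A₁ A₂ p := by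
  have hA {p} (hp : p ∈ Hplus2 J m) := map_fromSlices hs.n_mul_self hcj hdec hp
  have hχ {p} (hp : p ∈ Hplus2 J m) := chi_mem_Hplus2 hcj hdec hp
  constructor
  · intro h p hp
    apply fromSlices_injOn hs hcj (hχ (hχ hp)) (hχ hp)
    rw [← hA (hχ hp), ← hA hp]
    exact DFunLike.congr_fun h _
  · intro h
    ext x
    obtain ⟨p, hp, rfl⟩ := exists_fromSlices_eq hs hcj x
    rw [ContinuousLinearMap.comp_apply, hA hp, hA (hχ hp), h p hp]

lemma map_fromSlices_eq_zero_iff (hs : SliceSetup inn J m n) (hcj : IsSliceConj inn J m cj)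
    (hdec : IsSliceDecomp inn J m n cj A A₁ A₂) {q : H × H} (hq : q ∈ Hplus2 J m) :
    A (fromSlices n cj q) = 0 ↔ chi cj A₁ A₂ q = 0 := by
  rw [map_fromSlices hs.n_mul_self hcj hdec hq, ← fromSlices_zero (n := n) hcj]
  exact (fromSlices_injOn hs hcj).eq_iff (chi_mem_Hplus2 hcj hdec hq)
    ⟨zero_mem_Hplus, zero_mem_Hplus⟩

lemma fromSlices_mem_qOrth_kerB_iff (hinn : QInner inn) (hs : SliceSetup inn J m n)
    (hcj : IsSliceConj inn J m cj) (hdec : IsSliceDecomp inn J m n cj A A₁ A₂) {p : H × H}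
    (hp : p ∈ Hplus2 J m) :
    fromSlices n cj p ∈ qOrth inn (kerB A) ↔
      ∀ q ∈ Hplus2 J m, chi cj A₁ A₂ q = 0 → innP inn q p = 0 := by
  have hker {q} (hq : q ∈ Hplus2 J m) := map_fromSlices_eq_zero_iff hs hcj hdec hq
  constructor
  · intro h q hq hχq
    apply mul_left_cancel₀ quaternion_two_ne_zero
    rw [mul_zero, ← cPart_inner_fromSlices hinn hs hcj hq hp, h _ ((hker hq).2 hχq)]
    simp [cPart]
  · intro h y hy
    have hvanish (z : H) (hz : z ∈ kerB A) : cPart m (inn z (fromSlices n cj p)) = 0 := by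
      obtain ⟨q, hq, rfl⟩ := exists_fromSlices_eq hs hcj z
      rw [cPart_inner_fromSlices hinn hs hcj hq hp, h q hq ((hker hq).1 hz), mul_zero]
    refine eq_zero_of_cPart_eq_zero hs.m_mul_self hs.n_ne_zero hs.anticomm (hvanish y hy) ?_
    have hny : op n • y ∈ kerB A := by
      show A (op n • y) = 0
      rw [map_smul, show A y = 0 from hy, smul_zero]
    have h' := hvanish _ hny
    rwa [hinn.smul_left, hs.star_n, neg_mul, cPart_neg, neg_eq_zero] at h'

lemma isPartialIsomB_iff_chi (hinn : QInner inn) (hs : SliceSetup inn J m n)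
    (hcj : IsSliceConj inn J m cj) (hdec : IsSliceDecomp inn J m n cj A A₁ A₂) :
    IsPartialIsomB inn A ↔ ∀ p ∈ Hplus2 J m,
      (∀ q ∈ Hplus2 J m, chi cj A₁ A₂ q = 0 → innP inn q p = 0) →
        normP (chi cj A₁ A₂ p) = normP p := by
  have hnorm {p} (hp : p ∈ Hplus2 J m) : ‖A (fromSlices n cj p)‖ = normP (chi cj A₁ A₂ p) := by
    rw [map_fromSlices hs.n_mul_self hcj hdec hp,
      norm_fromSlices hinn hs hcj (chi_mem_Hplus2 hcj hdec hp)]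
  constructor
  · intro h p hp hperp
    rw [← hnorm hp, ← norm_fromSlices hinn hs hcj hp]
    exact h _ ((fromSlices_mem_qOrth_kerB_iff hinn hs hcj hdec hp).2 hperp)
  · intro h x hx
    obtain ⟨p, hp, rfl⟩ := exists_fromSlices_eq hs hcj x
    rw [hnorm hp, norm_fromSlices hinn hs hcj hp]
    exact h p hp ((fromSlices_mem_qOrth_kerB_iff hinn hs hcj hdec hp).1 hx)

end Chi

theorem chi_projection_partial_isometry_general
    (inn : H → H → ℍ) (hinn : QInner inn)
    (J : H →L[ℍᵐᵒᵖ] H) (m n : ℍ) (hslice : SliceSetup inn J m n)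
    (cj : H → H) (hcj : IsSliceConj inn J m cj)
    (A : H →L[ℍᵐᵒᵖ] H) (A₁ A₂ : H → H)
    (hdec : IsSliceDecomp inn J m n cj A A₁ A₂) :
    -- orthogonal projection
    ((IsAdjB inn A A ∧ A.comp A = A) ↔
      ((∀ p ∈ Hplus2 J m, ∀ q ∈ Hplus2 J m,
          innP inn (chi cj A₁ A₂ p) q = innP inn p (chi cj A₁ A₂ q)) ∧
        ∀ p ∈ Hplus2 J m, chi cj A₁ A₂ (chi cj A₁ A₂ p) = chi cj A₁ A₂ p)) ∧
    -- partial isometry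
    (IsPartialIsomB inn A ↔
      ∀ p ∈ Hplus2 J m,
        (∀ q ∈ Hplus2 J m, chi cj A₁ A₂ q = 0 → innP inn q p = 0) →
          normP (chi cj A₁ A₂ p) = normP p) :=
  ⟨and_congr (isAdjB_self_iff_chi hinn hslice hcj hdec) (comp_self_iff_chi hslice hcj hdec),
    isPartialIsomB_iff_chi hinn hslice hcj hdec⟩

/-- `A ∈ B(H)` is an orthogonal projection (resp. a partial isometry) if
and only if the associated operator `χ_A` on `H₊ ⊕ H₊` is an orthogonal projection
(resp. a partial isometry). -/
theorem chi_projection_partial_isometry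
    [CompleteSpace H] (inn : H → H → ℍ) (hinn : QInner inn)
    (J : H →L[ℍᵐᵒᵖ] H) (m n : ℍ) (hslice : SliceSetup inn J m n)
    (cj : H → H) (hcj : IsSliceConj inn J m cj)
    (A : H →L[ℍᵐᵒᵖ] H) (A₁ A₂ : H → H)
    (hdec : IsSliceDecomp inn J m n cj A A₁ A₂) :
    -- orthogonal projection
    ((IsAdjB inn A A ∧ A.comp A = A) ↔
      ((∀ p ∈ Hplus2 J m, ∀ q ∈ Hplus2 J m,
          innP inn (chi cj A₁ A₂ p) q = innP inn p (chi cj A₁ A₂ q)) ∧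
        ∀ p ∈ Hplus2 J m, chi cj A₁ A₂ (chi cj A₁ A₂ p) = chi cj A₁ A₂ p)) ∧
    -- partial isometry
    (IsPartialIsomB inn A ↔
      ∀ p ∈ Hplus2 J m,
        (∀ q ∈ Hplus2 J m, chi cj A₁ A₂ q = 0 → innP inn q p = 0) →
          normP (chi cj A₁ A₂ p) = normP p) :=
  chi_projection_partial_isometry_general inn hinn J m n hslice cj hcj A A₁ A₂ hdec
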